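/- Let S ⊆ ℝ be measurable with γ_S(t) > 0 for all t, and let t, t* ∈ ℝ. Then sign(μ_t − μ_{t*}) = sign(t − t*). Moreover, for any constant β > 0 there is a constant c = c(β) > 0 such that if γ_S(t*) ≥ β, then |μ_t − μ_{t*}| ≥ c·min(1, |t − t*|). -/

import Mathlib

open MeasureTheory ProbabilityTheory Real Filter Topology

noncomputable section

/-- Euclidean dot product on `Fin n → ℝ`. -/
def dot {n : ℕ} (a b : Fin n → ℝ) : ℝ := ∑ i, a i * b i

/-- Euclidean (ℓ²) norm on `Fin n → ℝ`. -/
def norm2 {n : ℕ} (v : Fin n → ℝ) : ℝ := Real.sqrt (∑ i, (v i) ^ 2)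

/-- ℓ¹ norm on `Fin n → ℝ`. -/
def norm1 {n : ℕ} (v : Fin n → ℝ) : ℝ := ∑ i, |v i|

/-- Support of a vector, as a finset. -/
def spt {n : ℕ} (v : Fin n → ℝ) : Finset (Fin n) := Finset.univ.filter fun i => v i ≠ 0

/-- Standard Gaussian measure `N(0, I_n)` on `Fin n → ℝ`. -/
def stdGaussianPi (n : ℕ) : Measure (Fin n → ℝ) := Measure.pi fun _ => gaussianReal 0 1

/-- Survival probability `γ_S(t) = Pr[Z + t ∈ S]`, `Z ~ N(0,1)`. -/
def gammaS (S : Set ℝ) (t : ℝ) : ℝ := (gaussianReal t 1 S).toReal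

/-- Truncated normal `N(t, 1; S)`. -/
def truncNormal (S : Set ℝ) (t : ℝ) : Measure ℝ := (gaussianReal t 1)[|S]

/-- `μ_t`, the mean of `N(t,1;S)`. -/
def truncMean (S : Set ℝ) (t : ℝ) : ℝ := ∫ z, z ∂(truncNormal S t)

/-- `Var(Z_t)`, the variance of `N(t,1;S)`. -/
def truncVar (S : Set ℝ) (t : ℝ) : ℝ := variance id (truncNormal S t)

/-- Constant survival probability assumption: `E_{a ~ N(0,I_n)}[γ_S(aᵀ x*)] ≥ α`. -/
def CSP (n : ℕ) (xstar : Fin n → ℝ) (S : Set ℝ) (α : ℝ) : Prop :=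
  α ≤ ∫ a, gammaS S (dot a xstar) ∂(stdGaussianPi n)

/-- `m` i.i.d. untruncated samples `(a_j, η_j)`, `a_j ~ N(0,I_n)`, `η_j ~ N(0,1)`. -/
def rawMeasure (m n : ℕ) : Measure (Fin m → (Fin n → ℝ) × ℝ) :=
  Measure.pi fun _ => (stdGaussianPi n).prod (gaussianReal 0 1)

/-- The law of `m` truncated samples: condition the `m` i.i.d. pairs `(a_j, η_j)` on all
responses `a_jᵀ x* + η_j` lying in `S`.  (Equivalently, each sample is i.i.d. from the
law of `(a, aᵀx* + η)` conditioned on `aᵀx* + η ∈ S`.) -/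
def dataMeasure (m n : ℕ) (xstar : Fin n → ℝ) (S : Set ℝ) :
    Measure (Fin m → (Fin n → ℝ) × ℝ) :=
  (rawMeasure m n)[|{ω | ∀ j, dot (ω j).1 xstar + (ω j).2 ∈ S}]

/-- The design matrix `A` (rows `A_j`) of a data set. -/
def mat {m n : ℕ} (ω : Fin m → (Fin n → ℝ) × ℝ) : Fin m → Fin n → ℝ := fun j => (ω j).1

/-- The response vector `y`, `y_j = A_jᵀ x* + η_j`. -/
def yvec {m n : ℕ} (xstar : Fin n → ℝ) (ω : Fin m → (Fin n → ℝ) × ℝ) : Fin m → ℝ :=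
  fun j => dot (ω j).1 xstar + (ω j).2

/-- Truncated negative log-likelihood. -/
def nll (S : Set ℝ) {m n : ℕ} (A : Fin m → Fin n → ℝ) (y : Fin m → ℝ) (x : Fin n → ℝ) : ℝ :=
  (1 / (m : ℝ)) * ∑ j, ((dot (A j) x - y j) ^ 2 / 2
    + Real.log (∫ z in S, Real.exp (-(dot (A j) x - z) ^ 2 / 2)))


open scoped ENNReal NNReal

/-!
Let `ν` be the standard Gaussian restricted to `S`. The truncated normal `N(t,1;S)` is the
exponential tilt of `ν` by `z ↦ t z`, so `μ_t` is the derivative of the cumulant generating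
function `K(t) = log ∫ e^{tz} dν(z)` and `dμ_t/dt = K''(t) = Var(Z_t)`. The density of `Z_t` is at
most `1 / (√(2π) γ_S(t))`, so every window of length `√(2π) γ_S(t) / 2` carries mass at most `1/2`,
and Chebyshev's inequality gives `Var(Z_t) ≥ π γ_S(t)² / 16 > 0`: `t ↦ μ_t` is strictly increasing.
For the gap, `γ_S(t) = e^{K(t) - t²/2}`; convexity of `K` at the midpoint `t*` of `s` and `2t* - s`,
together with `γ_S(2t* - s) ≤ 1`, gives `γ_S(s) ≥ γ_S(t*)² e^{-(s - t*)²} ≥ β² / e` for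
`|s - t*| ≤ 1`, and the mean value theorem on a window of length `min 1 |t - t*|` concludes.
-/

lemma tilted_gaussianReal (μ : ℝ) {v : ℝ≥0} (hv : v ≠ 0) (t : ℝ) :
    (gaussianReal μ v).tilted (t * ·) = gaussianReal (μ + v * t) v := by
  ext s hs
  rw [tilted_mul_apply_mgf (X := fun x ↦ x) s, mgf_fun_id_gaussianReal,
    gaussianReal_apply _ hv, gaussianReal_of_var_ne_zero _ hv,
    setLIntegral_withDensity_eq_setLIntegral_mul _ (measurable_gaussianPDF _ _)
      (by fun_prop) hs]
  refine setLIntegral_congr_fun hs fun x _ ↦ ?_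
  simp only [Pi.mul_apply, gaussianPDF]
  rw [← ENNReal.ofReal_mul (gaussianPDFReal_nonneg _ _ _)]
  simp only [gaussianPDFReal_def, mul_assoc, ← exp_sub, ← exp_add]
  congr 3
  field_simp
  ring

lemma gaussianReal_eq_tilted (t : ℝ) : gaussianReal t 1 = (gaussianReal 0 1).tilted (t * ·) := by
  simp [tilted_gaussianReal 0 one_ne_zero t]

lemma mem_interior_integrableExpSet_restrict_gaussianReal (μ : ℝ) (v : ℝ≥0) (S : Set ℝ) (t : ℝ) :
    t ∈ interior (integrableExpSet id ((gaussianReal μ v).restrict S)) := by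
  have huniv : integrableExpSet id ((gaussianReal μ v).restrict S) = Set.univ :=
    Set.eq_univ_of_forall fun u ↦ (integrable_exp_mul_gaussianReal u).restrict
  simp [huniv]

lemma cond_tilted {α : Type*} [MeasurableSpace α] {μ : Measure α} {f : α → ℝ} {s : Set α}
    (hs : MeasurableSet s) (hf : Integrable (fun x ↦ exp (f x)) μ) :
    (μ.tilted f)[|s] = (μ.restrict s).tilted f := by
  ext A hA
  rw [cond_apply hs, tilted_apply_eq_ofReal_integral' _ hs,
    tilted_apply_eq_ofReal_integral' _ (hs.inter hA), tilted_apply_eq_ofReal_integral' _ hA,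
    Measure.restrict_restrict hA, Set.inter_comm A s]
  simp only [integral_div]
  set I := ∫ x in s, exp (f x) ∂μ
  set J := ∫ x in s ∩ A, exp (f x) ∂μ
  have hJI : J ≤ I := setIntegral_mono_set hf.integrableOn (ae_of_all _ fun _ ↦ (exp_pos _).le)
    Set.inter_subset_left.eventuallyLE
  have hJ_nonneg : 0 ≤ J := setIntegral_nonneg (hs.inter hA) fun _ _ ↦ (exp_pos _).le
  rcases hJ_nonneg.eq_or_lt' with hJ_zero | hJ_pos
  · simp [hJ_zero]
  have hZ : 0 < ∫ x, exp (f x) ∂μ :=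
    hJ_pos.trans_le (hJI.trans (setIntegral_le_integral hf (ae_of_all _ fun _ ↦ (exp_pos _).le)))
  rw [← ENNReal.ofReal_inv_of_pos (div_pos (hJ_pos.trans_le hJI) hZ),
    ← ENNReal.ofReal_mul (by positivity)]
  congr 1
  field_simp

lemma gaussianReal_le_mul_volume (μ : ℝ) {v : ℝ≥0} (hv : v ≠ 0) (s : Set ℝ) :
    gaussianReal μ v s ≤ ENNReal.ofReal (√(2 * π * v))⁻¹ * volume s := by
  rw [gaussianReal_apply μ hv, ← setLIntegral_const]
  refine lintegral_mono fun x ↦ ENNReal.ofReal_le_ofReal ?_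
  rw [gaussianPDFReal_def]
  refine mul_le_of_le_one_right (by positivity) (exp_le_one_iff.2 ?_)
  exact div_nonpos_of_nonpos_of_nonneg (neg_nonpos.2 (sq_nonneg _)) (by positivity)

section Convexity

variable {Ω : Type*} [MeasurableSpace Ω] {μ : Measure Ω} {X : Ω → ℝ}

lemma convexOn_cgf : ConvexOn ℝ (interior (integrableExpSet X μ)) (cgf X μ) := by
  refine convexOn_of_deriv2_nonneg' convex_integrableExpSet.interior
    analyticOnNhd_cgf.differentiableOn
    (fun t ht ↦ (analyticAt_cgf ht).deriv.differentiableAt.differentiableWithinAt)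
    fun t ht ↦ ?_
  rw [← iteratedDeriv_eq_iterate, ← variance_tilted_mul ht]
  exact variance_nonneg _ _

lemma mgf_midpoint_sq_le {s u : ℝ} (hs : s ∈ interior (integrableExpSet X μ))
    (hu : u ∈ interior (integrableExpSet X μ)) :
    mgf X μ ((s + u) / 2) ^ 2 ≤ mgf X μ s * mgf X μ u := by
  rcases eq_zero_or_neZero μ with rfl | hμ
  · simp
  have hw : (1 / 2 : ℝ) • s + (1 / 2 : ℝ) • u = (s + u) / 2 := by
    rw [smul_eq_mul, smul_eq_mul]; ring
  have hmid : (s + u) / 2 ∈ interior (integrableExpSet X μ) :=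
    hw ▸ convex_integrableExpSet.interior hs hu (by norm_num) (by norm_num) (by norm_num)
  have hconv := hw ▸ convexOn_cgf.2 hs hu (by norm_num : (0 : ℝ) ≤ 1 / 2)
    (by norm_num : (0 : ℝ) ≤ 1 / 2) (by norm_num)
  simp only [smul_eq_mul] at hconv
  have key : cgf X μ ((s + u) / 2) + cgf X μ ((s + u) / 2) ≤ cgf X μ s + cgf X μ u := by
    linarith
  have := exp_le_exp.2 key
  have hint : ∀ t ∈ interior (integrableExpSet X μ), Integrable (fun ω ↦ exp (t * X ω)) μ :=
    fun t ht ↦ interior_subset (s := integrableExpSet X μ) ht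
  rwa [exp_add, exp_add, ← sq, exp_cgf (hint _ hmid), exp_cgf (hint _ hs),
    exp_cgf (hint _ hu)] at this

end Convexity

lemma mul_one_sub_le_variance {Ω : Type*} [MeasurableSpace Ω] {P : Measure Ω}
    [IsProbabilityMeasure P] {X : Ω → ℝ} (hX : MemLp X 2 P) {r ε : ℝ} (hr : 0 < r)
    (hε : ∀ a, P.real {ω | |X ω - a| < r} ≤ ε) : r ^ 2 * (1 - ε) ≤ variance X P := by
  have hcheb : P.real {ω | r ≤ |X ω - P[X]|} ≤ variance X P / r ^ 2 :=
    ENNReal.toReal_le_of_le_ofReal (by have := variance_nonneg X P; positivity)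
      (meas_ge_le_variance_div_sq hX hr)
  have hcover : 1 ≤ P.real {ω | |X ω - P[X]| < r} + P.real {ω | r ≤ |X ω - P[X]|} :=
    calc (1 : ℝ) = P.real Set.univ := probReal_univ.symm
      _ ≤ P.real ({ω | |X ω - P[X]| < r} ∪ {ω | r ≤ |X ω - P[X]|}) :=
        measureReal_mono fun ω _ ↦ by
          simp only [Set.mem_union, Set.mem_ofPred_eq]; exact lt_or_ge _ _
      _ ≤ _ := measureReal_union_le _ _
  rw [le_div_iff₀ (by positivity)] at hcheb
  nlinarith [hε P[X]]

section TruncatedNormal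

variable {S : Set ℝ}

lemma truncNormal_eq_tilted (hS : MeasurableSet S) (t : ℝ) :
    truncNormal S t = ((gaussianReal 0 1).restrict S).tilted (t * ·) := by
  rw [truncNormal, gaussianReal_eq_tilted, cond_tilted hS (integrable_exp_mul_gaussianReal t)]

lemma gammaS_eq_mgf_div (t : ℝ) :
    gammaS S t = mgf id ((gaussianReal 0 1).restrict S) t / exp (t ^ 2 / 2) := by
  rw [gammaS, gaussianReal_eq_tilted, tilted_mul_apply_eq_ofReal_integral_mgf (X := fun x ↦ x),
    mgf_fun_id_gaussianReal, ENNReal.toReal_ofReal (by positivity)]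
  simp [mgf, integral_div]

lemma hasDerivAt_truncMean (hS : MeasurableSet S) (t : ℝ) :
    HasDerivAt (truncMean S) (truncVar S t) t := by
  have hI := mem_interior_integrableExpSet_restrict_gaussianReal 0 1 S
  have hmean : truncMean S = deriv (cgf id ((gaussianReal 0 1).restrict S)) := funext fun s ↦ by
    rw [truncMean, truncNormal_eq_tilted hS]
    exact integral_tilted_mul_self (hI s)
  have hvar : truncVar S t = iteratedDeriv 2 (cgf id ((gaussianReal 0 1).restrict S)) t := by
    rw [truncVar, truncNormal_eq_tilted hS]
    exact variance_tilted_mul (hI t)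
  rw [hmean, hvar, iteratedDeriv_succ, iteratedDeriv_one]
  exact (analyticAt_cgf (hI t)).deriv.differentiableAt.hasDerivAt

lemma gammaS_sq_mul_exp_le (t₀ s : ℝ) : gammaS S t₀ ^ 2 * exp (-(s - t₀) ^ 2) ≤ gammaS S s := by
  set M := mgf id ((gaussianReal 0 1).restrict S)
  have hI := mem_interior_integrableExpSet_restrict_gaussianReal 0 1 S
  have hlogconv : M t₀ ^ 2 ≤ M s * M (2 * t₀ - s) := by
    simpa using mgf_midpoint_sq_le (hI s) (hI (2 * t₀ - s))
  have hM_le : M (2 * t₀ - s) ≤ exp ((2 * t₀ - s) ^ 2 / 2) := by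
    have : gammaS S (2 * t₀ - s) ≤ 1 := measureReal_le_one
    rwa [gammaS_eq_mgf_div, div_le_one (exp_pos _)] at this
  rw [gammaS_eq_mgf_div, gammaS_eq_mgf_div]
  calc (M t₀ / exp (t₀ ^ 2 / 2)) ^ 2 * exp (-(s - t₀) ^ 2)
      = M t₀ ^ 2 * exp (-(s - t₀) ^ 2 - t₀ ^ 2) := by
        rw [div_pow, ← exp_nat_mul, exp_sub]; push_cast; ring_nf
    _ ≤ M s * exp ((2 * t₀ - s) ^ 2 / 2) * exp (-(s - t₀) ^ 2 - t₀ ^ 2) := by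
        gcongr
        exact hlogconv.trans (mul_le_mul_of_nonneg_left hM_le mgf_nonneg)
    _ = M s / exp (s ^ 2 / 2) := by
        rw [div_eq_mul_inv (M s), ← exp_neg, mul_assoc, ← exp_add]
        congr 2
        ring

lemma pi_mul_gammaS_sq_div_le_truncVar (hS : MeasurableSet S) {t : ℝ} (hγ : 0 < gammaS S t) :
    π * gammaS S t ^ 2 / 16 ≤ truncVar S t := by
  set γ := gammaS S t
  have hSγ : gaussianReal t 1 S = ENNReal.ofReal γ := (ENNReal.ofReal_toReal (by simp)).symm
  have : IsProbabilityMeasure (truncNormal S t) :=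
    cond_isProbabilityMeasure (by simpa [hSγ] using hγ)
  have hL2 : MemLp id 2 (truncNormal S t) := by
    rw [truncNormal_eq_tilted hS]
    exact_mod_cast memLp_tilted_mul (mem_interior_integrableExpSet_restrict_gaussianReal 0 1 S t) 2
  set r := √(2 * π) * γ / 4
  have hwindow : ∀ a, (truncNormal S t).real {z | |id z - a| < r} ≤ 1 / 2 := by
    intro a
    refine ENNReal.toReal_le_of_le_ofReal (by norm_num) ?_
    calc truncNormal S t {z | |id z - a| < r}
        = (gaussianReal t 1 S)⁻¹ * gaussianReal t 1 (S ∩ Metric.ball a r) := cond_apply hS _ _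
      _ ≤ (ENNReal.ofReal γ)⁻¹ * (ENNReal.ofReal (√(2 * π * (1 : ℝ≥0)))⁻¹ *
            volume (Metric.ball a r)) := by
          rw [hSγ]
          gcongr
          exact (measure_mono Set.inter_subset_right).trans
            (gaussianReal_le_mul_volume t one_ne_zero _)
      _ = ENNReal.ofReal (1 / 2) := by
          rw [Real.volume_ball, ← ENNReal.ofReal_inv_of_pos hγ,
            ← ENNReal.ofReal_mul (by positivity), ← ENNReal.ofReal_mul (by positivity)]
          congr 1
          simp only [NNReal.coe_one, mul_one, r]
          field_simp
          norm_num
  calc π * γ ^ 2 / 16 = r ^ 2 * (1 - 1 / 2) := by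
        simp only [r, div_pow, mul_pow, sq_sqrt (by positivity : (0 : ℝ) ≤ 2 * π)]; ring
    _ ≤ truncVar S t := mul_one_sub_le_variance hL2 (by positivity) hwindow

end TruncatedNormal

lemma StrictMono.sign_sub {f : ℝ → ℝ} (hf : StrictMono f) (x y : ℝ) :
    Real.sign (f x - f y) = Real.sign (x - y) := by
  rcases lt_trichotomy x y with h | rfl | h
  · rw [Real.sign_of_neg (sub_neg.2 (hf h)), Real.sign_of_neg (sub_neg.2 h)]
  · simp
  · rw [Real.sign_of_pos (sub_pos.2 (hf h)), Real.sign_of_pos (sub_pos.2 h)]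

lemma mul_min_one_abs_sub_le_abs_sub {f f' : ℝ → ℝ} (hf : ∀ x, HasDerivAt f (f' x) x)
    (hf' : 0 ≤ f') {a C : ℝ} (hC : ∀ x ∈ Set.Icc (a - 1) (a + 1), C ≤ f' x) (x : ℝ) :
    C * min 1 |x - a| ≤ |f x - f a| := by
  have hmono : Monotone f := monotone_of_hasDerivAt_nonneg hf hf'
  have hgrow := (convex_Icc (a - 1) (a + 1)).mul_sub_le_image_sub_of_le_deriv
    (fun y _ ↦ (hf y).continuousAt.continuousWithinAt)
    (fun y _ ↦ (hf y).differentiableAt.differentiableWithinAt)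
    (fun y hy ↦ (hf y).deriv ▸ hC y (interior_subset hy))
  set d := min 1 |x - a|
  have hd₀ : 0 ≤ d := le_min zero_le_one (abs_nonneg _)
  have hd₁ : d ≤ 1 := min_le_left _ _
  have hd : d ≤ |x - a| := min_le_right _ _
  rcases le_total a x with h | h
  · rw [abs_of_nonneg (sub_nonneg.2 h)] at hd
    rw [abs_of_nonneg (sub_nonneg.2 (hmono h))]
    calc C * d = C * (a + d - a) := by ring
      _ ≤ f (a + d) - f a := hgrow a ⟨by linarith, by linarith⟩ (a + d)
          ⟨by linarith, by linarith⟩ (by linarith)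
      _ ≤ f x - f a := by linarith [hmono (show a + d ≤ x by linarith)]
  · rw [abs_of_nonpos (sub_nonpos.2 h)] at hd
    rw [abs_of_nonpos (sub_nonpos.2 (hmono h))]
    calc C * d = C * (a - (a - d)) := by ring
      _ ≤ f a - f (a - d) := hgrow (a - d) ⟨by linarith, by linarith⟩ a
          ⟨by linarith, by linarith⟩ (by linarith)
      _ ≤ -(f x - f a) := by linarith [hmono (show x ≤ a - d by linarith)]

/-- monotonicity and a quantitative lower bound for the truncated mean
(Lemma `diff`). -/
theorem truncMean_sign_and_gap :
    (∀ S : Set ℝ, MeasurableSet S → (∀ t : ℝ, 0 < gammaS S t) →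
      ∀ t tstar : ℝ,
        Real.sign (truncMean S t - truncMean S tstar) = Real.sign (t - tstar)) ∧
    (∀ β : ℝ, 0 < β → ∃ c : ℝ, 0 < c ∧
      ∀ S : Set ℝ, MeasurableSet S → (∀ t : ℝ, 0 < gammaS S t) →
        ∀ t tstar : ℝ, β ≤ gammaS S tstar →
          c * min 1 |t - tstar| ≤ |truncMean S t - truncMean S tstar|) := by
  refine ⟨fun S hS hpos t tstar ↦ ?_,
    fun β hβ ↦ ⟨π * (β ^ 2 * exp (-1)) ^ 2 / 16, by positivity, ?_⟩⟩
  · have hvar_pos (s : ℝ) : 0 < truncVar S s :=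
      (pi_mul_gammaS_sq_div_le_truncVar hS (hpos s)).trans_lt' (by have := hpos s; positivity)
    exact (strictMono_of_hasDerivAt_pos (hasDerivAt_truncMean hS) hvar_pos).sign_sub t tstar
  · intro S hS _ t tstar hβγ
    refine mul_min_one_abs_sub_le_abs_sub (hasDerivAt_truncMean hS)
      (fun s ↦ variance_nonneg _ _) (fun s hs ↦ ?_) t
    have hγs : β ^ 2 * exp (-1) ≤ gammaS S s := by
      have hdist : (s - tstar) ^ 2 ≤ 1 := by nlinarith [hs.1, hs.2]
      calc β ^ 2 * exp (-1) ≤ gammaS S tstar ^ 2 * exp (-(s - tstar) ^ 2) := by gcongr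
        _ ≤ gammaS S s := gammaS_sq_mul_exp_le tstar s
    calc π * (β ^ 2 * exp (-1)) ^ 2 / 16 ≤ π * gammaS S s ^ 2 / 16 := by gcongr
      _ ≤ truncVar S s := pi_mul_gammaS_sq_div_le_truncVar hS (hγs.trans_lt' (by positivity))
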